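/- Let L ⊆ Ω(d) be a finite set with |x^*y| < 1 for all distinct x,y ∈ L, let t ≥ 1, and suppose Σ_{x,y∈L} |x^*y|^{2t} = |L|²/C(d+t−1,t) (i.e., the projective points spanned by L form a complex projective t-design). Let n > 1 be coprime to every integer in {2,3,…,t}, let ω ∈ ℂ be a primitive n-th root of unity, and let X = ⋃_{i=0}^{n−1} ω^i L (the sets ω^i L are pairwise disjoint). Then X is a complex spherical 𝒯-design for 𝒯 = {(k,l) ∈ ℕ×ℕ : k ≤ t and l ≤ t}. -/

import Mathlib

open Finset

/-- The Hermitian inner product `x^* y = ∑ i, conj (x i) * y i` on `ℂ^d`. -/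
noncomputable def cInner {d : ℕ} (x y : Fin d → ℂ) : ℂ :=
  ∑ i, (starRingEnd ℂ) (x i) * y i

/-- A lower set in `ℕ × ℕ` with respect to the product order. -/
def IsLowerSet' (T : Finset (ℕ × ℕ)) : Prop :=
  ∀ kl ∈ T, ∀ mn : ℕ × ℕ, mn.1 ≤ kl.1 → mn.2 ≤ kl.2 → mn ∈ T

/-- The average over the unit sphere `Ω(d)` of the monomial
`z ↦ ∏ i, z i ^ a i * conj (z i) ^ b i`. -/
noncomputable def monomialAvg (d : ℕ) (a b : Fin d → ℕ) : ℂ :=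
  if a = b then
    ((Nat.factorial (d - 1) : ℂ) * ∏ i, (Nat.factorial (a i) : ℂ)) /
      (Nat.factorial (d + (∑ i, a i) - 1) : ℂ)
  else 0

/-- `X` is a complex spherical `T`-design: every monomial of bidegree `(k,l) ∈ T`
has the same average over `X` as over the sphere `Ω(d)`. -/
def IsDesign (d : ℕ) (X : Finset (Fin d → ℂ)) (T : Finset (ℕ × ℕ)) : Prop :=
  ∀ kl ∈ T, ∀ a b : Fin d → ℕ, (∑ i, a i) = kl.1 → (∑ i, b i) = kl.2 →
    (∑ z ∈ X, (∏ i, (z i) ^ (a i)) * ∏ i, ((starRingEnd ℂ) (z i)) ^ (b i))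
      = (X.card : ℂ) * monomialAvg d a b

/-- The Jacobi polynomial `g_{k,l}` for the complex sphere in dimension `d`. -/
noncomputable def jacobi (d k l : ℕ) (x : ℂ) : ℂ :=
  (((d + k + l - 1 : ℕ) : ℂ) / (Nat.factorial (d - 1) : ℂ)) *
    ∑ r ∈ Finset.range (min k l + 1),
      (((-1 : ℂ) ^ r * (Nat.factorial (d + k + l - r - 2) : ℂ)) /
          ((Nat.factorial r : ℂ) * (Nat.factorial (k - r) : ℂ) *
            (Nat.factorial (l - r) : ℂ))) *
        x ^ (k - r) * ((starRingEnd ℂ) x) ^ (l - r)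

open scoped Classical in
/-- The inner product set `A(X) = {x^* y : x, y ∈ X, x ≠ y}`. -/
noncomputable def innerSet {d : ℕ} (X : Finset (Fin d → ℂ)) : Finset ℂ :=
  ((X ×ˢ X).filter fun p => p.1 ≠ p.2).image fun p => cInner p.1 p.2

/-- `m_{k,l}`, the dimension of the harmonic space `Harm(k,l)` in dimension `d`. -/
def mdim (d k l : ℕ) : ℕ :=
  (d + k - 1).choose (d - 1) * (d + l - 1).choose (d - 1) -
    (d + k - 2).choose (d - 1) * (d + l - 2).choose (d - 1)

/-- The convolution `U * V = {(k + l', k' + l) : (k,l) ∈ U, (k',l') ∈ V}`. -/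
def convSet (U V : Finset (ℕ × ℕ)) : Finset (ℕ × ℕ) :=
  (U ×ˢ V).image fun p => (p.1.1 + p.2.2, p.2.1 + p.1.2)

/-- `X` is an `S`-code: it has an annihilator polynomial supported on monomials
`x^k * conj x^l` with `(k,l) ∈ S`. -/
def IsCode (d : ℕ) (X : Finset (Fin d → ℂ)) (S : Finset (ℕ × ℕ)) : Prop :=
  ∃ c : ℕ × ℕ → ℝ,
    (∀ α ∈ innerSet X, ∑ kl ∈ S, (c kl : ℂ) * α ^ kl.1 * ((starRingEnd ℂ) α) ^ kl.2 = 0) ∧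
    0 < ∑ kl ∈ S, c kl

open scoped Classical

/-!
Expanding `(x^* y)^t` by the multinomial theorem writes `∑_{x,y∈L} |x^* y|^{2t}` as a
weighted sum, with multinomial weights, of `|M_{ab}|²`, where `M_{ab} = ∑_{x∈L} x^a conj(x)^b`
are the moments of `L` in bidegree `(t,t)`. Against the sphere moments `T_{ab} = |L| μ_{ab}`
the same weighted sums `⟨M,T⟩` and `⟨T,T⟩` both equal `|L|² / C(d+t-1,t)`, so the projective
design identity says that the weighted sum of `|M_{ab} - T_{ab}|²` vanishes, i.e. `M = T`.
Multiplying by `∑ |x_i|² = 1` carries this down to every bidegree `(k,k)` with `k ≤ t`.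

The moment of `X = ⋃ ω^i L` in bidegree `(k,l)` is that of `L` times `∑_{i<n} (ω^{k-l})^i`,
which is `n` for `k = l` and `0` otherwise, since `ω^{k-l}` is again a primitive `n`-th root
of unity when `0 < |k-l| ≤ t`.
-/

open ComplexConjugate
open scoped Nat

variable {d : ℕ}

noncomputable def moment (X : Finset (Fin d → ℂ)) (a b : Fin d → ℕ) : ℂ :=
  ∑ z ∈ X, (∏ i, z i ^ a i) * ∏ i, conj (z i) ^ b i

lemma isDesign_singleton_iff {X : Finset (Fin d → ℂ)} {k l : ℕ} :
    IsDesign d X {(k, l)} ↔ ∀ a b : Fin d → ℕ, ∑ i, a i = k → ∑ i, b i = l →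
      moment X a b = X.card * monomialAvg d a b := by
  simp [IsDesign, moment]

lemma conj_cInner (x y : Fin d → ℂ) : conj (cInner x y) = cInner y x := by
  simp only [cInner, map_sum, map_mul, Complex.conj_conj, mul_comm]

lemma cInner_pow_mul_cInner_pow (x y : Fin d → ℂ) (t : ℕ) :
    cInner x y ^ t * cInner y x ^ t = (‖cInner x y‖ : ℂ) ^ (2 * t) := by
  rw [← conj_cInner x y, ← mul_pow, Complex.mul_conj, Complex.normSq_eq_norm_sq, pow_mul]
  push_cast
  rfl

lemma conj_moment (X : Finset (Fin d → ℂ)) (a b : Fin d → ℕ) :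
    conj (moment X a b) = moment X b a := by
  simp only [moment, map_sum, map_mul, map_prod, map_pow, Complex.conj_conj, mul_comm]

lemma prod_pow_add_single (z : Fin d → ℂ) (a : Fin d → ℕ) (i : Fin d) :
    ∏ j, z j ^ (a + Pi.single i 1 : Fin d → ℕ) j = (∏ j, z j ^ a j) * z i := by
  have hsingle : ∏ j, z j ^ (Pi.single i 1 : Fin d → ℕ) j = z i := by
    rw [Fintype.prod_eq_single i fun j hj => by simp [hj], Pi.single_eq_same, pow_one]
  simp only [Pi.add_apply, pow_add, Finset.prod_mul_distrib, hsingle]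

lemma moment_eq_sum_moment_add_single {X : Finset (Fin d → ℂ)}
    (hX : ∀ x ∈ X, cInner x x = 1) (a b : Fin d → ℕ) :
    moment X a b = ∑ i, moment X (a + Pi.single i 1) (b + Pi.single i 1) := by
  simp only [moment, prod_pow_add_single]
  rw [Finset.sum_comm]
  refine Finset.sum_congr rfl fun x hx => ?_
  rw [← mul_one (_ * _), ← hX x hx, cInner, Finset.mul_sum]
  exact Finset.sum_congr rfl fun i _ => by ring

lemma moment_image_smul (X : Finset (Fin d → ℂ)) {c : ℂ} (hc : c ≠ 0) (a b : Fin d → ℕ) :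
    moment (X.image (c • ·)) a b = c ^ (∑ i, a i) * conj c ^ (∑ i, b i) * moment X a b := by
  rw [moment, Finset.sum_image fun x _ y _ h => smul_right_injective _ hc h, moment,
    Finset.mul_sum]
  refine Finset.sum_congr rfl fun x _ => ?_
  simp only [Pi.smul_apply, smul_eq_mul, map_mul, mul_pow, Finset.prod_mul_distrib,
    Finset.prod_pow_eq_pow_sum]
  ring

lemma cInner_pow_eq_sum (t : ℕ) (x y : Fin d → ℂ) :
    cInner x y ^ t = ∑ a ∈ piAntidiag univ t,
      (Nat.multinomial univ a : ℂ) * ((∏ i, conj (x i) ^ a i) * ∏ i, y i ^ a i) := by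
  simp only [cInner, Finset.sum_pow_eq_sum_piAntidiag, mul_pow, Finset.prod_mul_distrib]

lemma sum_multinomial_mul_moment_self {X : Finset (Fin d → ℂ)}
    (hX : ∀ x ∈ X, cInner x x = 1) (t : ℕ) :
    ∑ a ∈ piAntidiag univ t, (Nat.multinomial univ a : ℂ) * moment X a a = X.card := by
  have : ∑ x ∈ X, cInner x x ^ t = X.card := by simp +contextual [hX]
  rw [← this, Finset.sum_congr rfl fun x _ => cInner_pow_eq_sum t x x, Finset.sum_comm]
  simp only [moment, Finset.mul_sum, mul_comm]

lemma sum_cInner_pow_mul_cInner_pow (X : Finset (Fin d → ℂ)) (t : ℕ) :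
    ∑ x ∈ X, ∑ y ∈ X, cInner x y ^ t * cInner y x ^ t =
      ∑ a ∈ piAntidiag univ t, ∑ b ∈ piAntidiag univ t,
        (Nat.multinomial univ a : ℂ) * Nat.multinomial univ b *
          (moment X a b * moment X b a) := by
  have hterm : ∀ x y : Fin d → ℂ, cInner x y ^ t * cInner y x ^ t =
      ∑ a ∈ piAntidiag univ t, ∑ b ∈ piAntidiag univ t,
        (Nat.multinomial univ a : ℂ) * Nat.multinomial univ b *
          (((∏ i, x i ^ a i) * ∏ i, conj (x i) ^ b i) *
            ((∏ i, y i ^ b i) * ∏ i, conj (y i) ^ a i)) := by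
    intro x y
    rw [cInner_pow_eq_sum, cInner_pow_eq_sum, Finset.sum_mul_sum, Finset.sum_comm]
    exact Finset.sum_congr rfl fun a _ => Finset.sum_congr rfl fun b _ => by ring
  simp only [hterm, moment, Finset.sum_mul_sum]
  simp only [Finset.mul_sum]
  simp_rw [Finset.sum_comm (s := X) (t := piAntidiag univ t)]

lemma conj_monomialAvg (a b : Fin d → ℕ) : conj (monomialAvg d a b) = monomialAvg d a b := by
  unfold monomialAvg
  split_ifs <;> simp

lemma sum_product_mul_monomialAvg (s : Finset (Fin d → ℕ))
    (F : (Fin d → ℕ) × (Fin d → ℕ) → ℂ) :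
    ∑ p ∈ s ×ˢ s, F p * monomialAvg d p.1 p.2 = ∑ a ∈ s, F (a, a) * monomialAvg d a a := by
  rw [Finset.sum_product]
  refine Finset.sum_congr rfl fun a ha => Finset.sum_eq_single_of_mem a ha fun b _ hb => ?_
  simp [monomialAvg, Ne.symm hb]

lemma card_piAntidiag_univ (t : ℕ) :
    (piAntidiag (univ : Finset (Fin d)) t).card = (d + t - 1).choose t := by
  rw [← Finset.map_sym_eq_piAntidiag, Finset.card_map, Finset.sym_univ, Finset.card_univ,
    Sym.card_sym_eq_choose, Fintype.card_fin]

lemma multinomial_mul_monomialAvg_self (hd : 0 < d) {t : ℕ} (a : Fin d → ℕ)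
    (ha : ∑ i, a i = t) :
    (Nat.multinomial univ a : ℂ) * monomialAvg d a a = 1 / ((d + t - 1).choose t) := by
  have hspec : (∏ i, (a i)!) * Nat.multinomial univ a = t ! := ha ▸ Nat.multinomial_spec univ a
  have hchoose : (d + t - 1).choose t * t ! * (d - 1)! = (d + t - 1)! := by
    rw [← Nat.choose_mul_factorial_mul_factorial (by omega : t ≤ d + t - 1),
      show d + t - 1 - t = d - 1 by omega]
  have hC : ((d + t - 1).choose t : ℂ) ≠ 0 := by
    exact_mod_cast (Nat.choose_pos (by omega)).ne'
  have hfac : ((d + t - 1)! : ℂ) ≠ 0 := Nat.cast_ne_zero.mpr (Nat.factorial_ne_zero _)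
  rw [monomialAvg, if_pos rfl, ha]
  field_simp
  exact_mod_cast by rw [← hchoose, ← hspec]; ring

lemma sum_add_single (a : Fin d → ℕ) (i : Fin d) :
    ∑ j, (a + Pi.single i 1 : Fin d → ℕ) j = ∑ j, a j + 1 := by
  simp [Finset.sum_add_distrib]

lemma prod_factorial_add_single (a : Fin d → ℕ) (i : Fin d) :
    ∏ j, ((a + Pi.single i 1 : Fin d → ℕ) j)! = (a i + 1) * ∏ j, (a j)! := by
  rw [← Finset.mul_prod_erase univ _ (mem_univ i),
    ← Finset.mul_prod_erase univ (fun j => (a j)!) (mem_univ i),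
    Finset.prod_congr rfl fun j hj => by
      rw [Pi.add_apply, Pi.single_eq_of_ne (ne_of_mem_erase hj), add_zero]]
  simp [Nat.factorial_succ, mul_assoc]

lemma sum_monomialAvg_add_single (hd : 0 < d) (a b : Fin d → ℕ) :
    ∑ i, monomialAvg d (a + Pi.single i 1) (b + Pi.single i 1) = monomialAvg d a b := by
  by_cases hab : a = b
  · subst hab
    obtain ⟨t, ht⟩ : ∃ t, ∑ i, a i = t := ⟨_, rfl⟩
    have hfac : ((d + (t + 1) - 1)! : ℂ) = (d + t) * (d + t - 1)! := by
      rw [show d + (t + 1) - 1 = d + t - 1 + 1 by omega, Nat.factorial_succ,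
        show d + t - 1 + 1 = d + t by omega]
      push_cast; ring
    have hsum : ∑ i, ((a i : ℂ) + 1) = d + t := by
      rw [Finset.sum_add_distrib, ← Nat.cast_sum, ht]
      simp [add_comm]
    simp only [monomialAvg, if_true, sum_add_single, ← Nat.cast_prod, prod_factorial_add_single,
      ht, hfac, Nat.cast_mul]
    rw [← Finset.sum_div, ← Finset.mul_sum, ← Finset.sum_mul]
    push_cast
    rw [hsum]
    have hdt : (d : ℂ) + t ≠ 0 := by exact_mod_cast (by omega : d + t ≠ 0)
    field_simp
  · simp only [monomialAvg, if_neg hab, add_left_inj, Finset.sum_const_zero]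

lemma eq_of_sum_mul_conj_eq {ι : Type*} {s : Finset ι} {w : ι → ℝ} (hw : ∀ i ∈ s, 0 < w i)
    {f g : ι → ℂ} {K : ℝ}
    (hff : ∑ i ∈ s, (w i : ℂ) * (f i * conj (f i)) = K)
    (hfg : ∑ i ∈ s, (w i : ℂ) * (f i * conj (g i)) = K)
    (hgg : ∑ i ∈ s, (w i : ℂ) * (g i * conj (g i)) = K) {i : ι} (hi : i ∈ s) : f i = g i := by
  have hgf : ∑ i ∈ s, (w i : ℂ) * (g i * conj (f i)) = K := by
    rw [← Complex.conj_ofReal, ← hfg, map_sum]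
    simp only [map_mul, Complex.conj_ofReal, Complex.conj_conj, mul_comm (g _)]
  have hzero : ∑ i ∈ s, w i * Complex.normSq (f i - g i) = 0 := by
    apply Complex.ofReal_injective
    push_cast
    simp only [← Complex.mul_conj, map_sub, mul_sub, sub_mul, Finset.sum_sub_distrib, hff, hfg,
      hgf, hgg, sub_self]
  have hi0 := (Finset.sum_eq_zero_iff_of_nonneg fun j hj =>
    mul_nonneg (hw j hj).le (Complex.normSq_nonneg _)).mp hzero i hi
  rw [mul_eq_zero, or_iff_right (hw i hi).ne', Complex.normSq_eq_zero, sub_eq_zero] at hi0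
  exact hi0

lemma sum_multinomial_mul_moment_mul_conj_monomialAvg (hd : 0 < d) {X : Finset (Fin d → ℂ)}
    (hX : ∀ x ∈ X, cInner x x = 1) (t : ℕ) :
    ∑ p ∈ piAntidiag univ t ×ˢ piAntidiag univ t,
      (Nat.multinomial univ p.1 : ℂ) * Nat.multinomial univ p.2 *
        (moment X p.1 p.2 * conj (X.card * monomialAvg d p.1 p.2)) =
      (X.card : ℂ) ^ 2 / (d + t - 1).choose t := by
  simp only [map_mul, Complex.conj_natCast, conj_monomialAvg]
  rw [Finset.sum_congr rfl fun p _ => show _ = (Nat.multinomial univ p.1 *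
      Nat.multinomial univ p.2 * moment X p.1 p.2 * X.card : ℂ) * monomialAvg d p.1 p.2 by ring,
    sum_product_mul_monomialAvg]
  calc _ = ∑ a ∈ piAntidiag univ t, (X.card : ℂ) / (d + t - 1).choose t *
        (Nat.multinomial univ a * moment X a a) := Finset.sum_congr rfl fun a ha => by
          linear_combination (X.card * Nat.multinomial univ a * moment X a a : ℂ) *
            multinomial_mul_monomialAvg_self hd a (mem_piAntidiag.mp ha).1
    _ = _ := by rw [← Finset.mul_sum, sum_multinomial_mul_moment_self hX]; ring

lemma sum_multinomial_mul_monomialAvg_mul_conj (hd : 0 < d) (N t : ℕ) :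
    ∑ p ∈ piAntidiag (univ : Finset (Fin d)) t ×ˢ piAntidiag univ t,
      (Nat.multinomial univ p.1 : ℂ) * Nat.multinomial univ p.2 *
        (N * monomialAvg d p.1 p.2 * conj (N * monomialAvg d p.1 p.2)) =
      (N : ℂ) ^ 2 / (d + t - 1).choose t := by
  simp only [map_mul, Complex.conj_natCast, conj_monomialAvg]
  rw [Finset.sum_congr rfl fun p _ => show _ = (Nat.multinomial univ p.1 *
      Nat.multinomial univ p.2 * N ^ 2 * monomialAvg d p.1 p.2 : ℂ) *
        monomialAvg d p.1 p.2 by ring,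
    sum_product_mul_monomialAvg]
  have hC : ((d + t - 1).choose t : ℂ) ≠ 0 := by exact_mod_cast (Nat.choose_pos (by omega)).ne'
  calc _ = ∑ a ∈ piAntidiag univ t, (N : ℂ) ^ 2 / (d + t - 1).choose t ^ 2 :=
        Finset.sum_congr rfl fun a ha => by
          linear_combination (N ^ 2 * (Nat.multinomial univ a * monomialAvg d a a +
            1 / (d + t - 1).choose t) : ℂ) *
              multinomial_mul_monomialAvg_self hd a (mem_piAntidiag.mp ha).1
    _ = _ := by
      rw [Finset.sum_const, card_piAntidiag_univ, nsmul_eq_mul]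
      field_simp

theorem isDesign_diag_of_sum_norm_cInner_pow (hd : 0 < d) {L : Finset (Fin d → ℂ)}
    (hL : ∀ x ∈ L, cInner x x = 1) (t : ℕ)
    (hproj : ∑ x ∈ L, ∑ y ∈ L, ‖cInner x y‖ ^ (2 * t) =
      (L.card : ℝ) ^ 2 / ((d + t - 1).choose t)) :
    IsDesign d L {(t, t)} := by
  rw [isDesign_singleton_iff]
  intro a b ha hb
  refine eq_of_sum_mul_conj_eq (s := piAntidiag univ t ×ˢ piAntidiag univ t) (i := (a, b))
    (w := fun p => Nat.multinomial univ p.1 * Nat.multinomial univ p.2)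
    (f := fun p => moment L p.1 p.2) (g := fun p => L.card * monomialAvg d p.1 p.2)
    (K := (L.card : ℝ) ^ 2 / ((d + t - 1).choose t)) ?_ ?_ ?_ ?_ (by simp [mem_piAntidiag, ha, hb])
  · exact fun p _ => mul_pos (Nat.cast_pos.mpr (Nat.multinomial_pos _ _))
      (Nat.cast_pos.mpr (Nat.multinomial_pos _ _))
  · rw [Finset.sum_product, ← hproj]
    push_cast
    simp only [conj_moment, ← cInner_pow_mul_cInner_pow]
    exact (sum_cInner_pow_mul_cInner_pow L t).symm
  · push_cast
    exact sum_multinomial_mul_moment_mul_conj_monomialAvg hd hL t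
  · push_cast
    exact sum_multinomial_mul_monomialAvg_mul_conj hd L.card t

theorem isDesign_diag_of_succ (hd : 0 < d) {L : Finset (Fin d → ℂ)}
    (hL : ∀ x ∈ L, cInner x x = 1) {k : ℕ} (h : IsDesign d L {(k + 1, k + 1)}) :
    IsDesign d L {(k, k)} := by
  rw [isDesign_singleton_iff] at h ⊢
  intro a b ha hb
  rw [moment_eq_sum_moment_add_single hL, ← sum_monomialAvg_add_single hd, Finset.mul_sum]
  exact Finset.sum_congr rfl fun i _ =>
    h _ _ (by rw [sum_add_single, ha]) (by rw [sum_add_single, hb])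

theorem isDesign_diag_of_le_of_sum_norm_cInner_pow {L : Finset (Fin d → ℂ)}
    (hL : ∀ x ∈ L, cInner x x = 1) {t : ℕ}
    (hproj : ∑ x ∈ L, ∑ y ∈ L, ‖cInner x y‖ ^ (2 * t) =
      (L.card : ℝ) ^ 2 / ((d + t - 1).choose t)) {k : ℕ} (hk : k ≤ t) :
    IsDesign d L {(k, k)} := by
  obtain rfl | ⟨x, hx⟩ := L.eq_empty_or_nonempty
  · simp [isDesign_singleton_iff, moment]
  have hd : 0 < d := Nat.pos_of_ne_zero fun h => by subst h; simpa [cInner] using hL x hx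
  induction hk using Nat.decreasingInduction with
  | self => exact isDesign_diag_of_sum_norm_cInner_pow hd hL t hproj
  | of_succ k _ ih => exact isDesign_diag_of_succ hd hL ih

section Cover

variable {L : Finset (Fin d → ℂ)} {ω : ℂ} {n : ℕ}

lemma moment_biUnion_image_pow_smul (hω : ω ≠ 0)
    (hdisj : Set.PairwiseDisjoint ↑(range n) fun i => L.image (ω ^ i • ·)) (a b : Fin d → ℕ) :
    moment ((range n).biUnion fun i => L.image (ω ^ i • ·)) a b =
      (∑ i ∈ range n, (ω ^ (∑ j, a j) * conj ω ^ (∑ j, b j)) ^ i) * moment L a b := by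
  rw [moment, Finset.sum_biUnion hdisj, Finset.sum_mul]
  refine Finset.sum_congr rfl fun i _ => ?_
  rw [← moment, moment_image_smul L (pow_ne_zero i hω), map_pow]
  ring

lemma card_biUnion_image_pow_smul (hω : ω ≠ 0)
    (hdisj : Set.PairwiseDisjoint ↑(range n) fun i => L.image (ω ^ i • ·)) :
    ((range n).biUnion fun i => L.image (ω ^ i • ·)).card = n * L.card := by
  rw [Finset.card_biUnion hdisj, Finset.sum_congr rfl fun i _ =>
    Finset.card_image_of_injective L (smul_right_injective _ (pow_ne_zero i hω))]
  simp

end Cover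

lemma pow_mul_conj_pow_self {ω : ℂ} (hω : ‖ω‖ = 1) (k : ℕ) : ω ^ k * conj ω ^ k = 1 := by
  rw [← mul_pow, Complex.mul_conj, Complex.normSq_eq_norm_sq, hω]
  simp

lemma IsPrimitiveRoot.sum_range_pow_mul_conj_pow_eq_zero {ω : ℂ} {n k l : ℕ}
    (hω : IsPrimitiveRoot ω n) (hn : 1 < n) (hkl : Int.gcd (k - l) n = 1) :
    ∑ i ∈ range n, (ω ^ k * conj ω ^ l) ^ i = 0 := by
  have hconj : conj ω = ω⁻¹ := (Complex.inv_eq_conj (hω.norm'_eq_one (by omega))).symm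
  rw [hconj, inv_pow, ← div_eq_mul_inv, ← zpow_natCast, ← zpow_natCast,
    ← zpow_sub₀ (hω.ne_zero (by omega))]
  exact (hω.zpow_of_gcd_eq_one _ hkl).geom_sum_eq_zero hn

lemma int_gcd_sub_eq_one_of_forall_coprime {n t k l : ℕ}
    (hcop : ∀ m : ℕ, 2 ≤ m → m ≤ t → Nat.Coprime n m) (hk : k ≤ t) (hl : l ≤ t) (hkl : k ≠ l) :
    Int.gcd (k - l) n = 1 := by
  change Nat.gcd (k - l : ℤ).natAbs n = 1
  obtain h1 | h2 : (k - l : ℤ).natAbs = 1 ∨ 2 ≤ (k - l : ℤ).natAbs := by omega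
  · rw [h1, Nat.gcd_one_left]
  · exact (hcop _ h2 (by omega)).symm

theorem stmt_4_general {d n : ℕ} (t : ℕ) (ω : ℂ) (hω : IsPrimitiveRoot ω n)
    (hn : 1 < n) (hcop : ∀ m : ℕ, 2 ≤ m → m ≤ t → Nat.Coprime n m)
    (L : Finset (Fin d → ℂ)) (hLsphere : ∀ x ∈ L, cInner x x = 1)
    (hdisj : ∀ i j : ℕ, i < n → j < n → i ≠ j →
      Disjoint (L.image fun x => ω ^ i • x) (L.image fun x => ω ^ j • x))
    (hproj : ∑ x ∈ L, ∑ y ∈ L, ‖cInner x y‖ ^ (2 * t) =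
      (L.card : ℝ) ^ 2 / ((d + t - 1).choose t)) :
    IsDesign d ((Finset.range n).biUnion fun i => L.image fun x => ω ^ i • x)
      ((Finset.range (t + 1)) ×ˢ (Finset.range (t + 1))) := by
  have hω0 : ω ≠ 0 := hω.ne_zero (by omega)
  have hdisj' : Set.PairwiseDisjoint ↑(range n) fun i => L.image (ω ^ i • ·) :=
    fun i hi j hj hij => hdisj i j (mem_range.mp hi) (mem_range.mp hj) hij
  intro kl hT a b ha hb
  obtain ⟨hk, hl⟩ : kl.1 ≤ t ∧ kl.2 ≤ t := by simpa [Nat.lt_succ_iff] using hT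
  change moment _ a b = _
  rw [moment_biUnion_image_pow_smul hω0 hdisj', card_biUnion_image_pow_smul hω0 hdisj', ha, hb]
  obtain hkl | hkl := eq_or_ne kl.1 kl.2
  · rw [← hkl, pow_mul_conj_pow_self (hω.norm'_eq_one (by omega))]
    simp only [one_pow, Finset.sum_const, Finset.card_range, nsmul_eq_mul, mul_one]
    have hL := isDesign_diag_of_le_of_sum_norm_cInner_pow hLsphere hproj hk
    rw [isDesign_singleton_iff.mp hL a b ha (hb.trans hkl.symm), Nat.cast_mul, mul_assoc]
  · have hab : a ≠ b := by rintro rfl; exact hkl (ha.symm.trans hb)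
    rw [hω.sum_range_pow_mul_conj_pow_eq_zero hn
      (int_gcd_sub_eq_one_of_forall_coprime hcop hk hl hkl), zero_mul, monomialAvg, if_neg hab,
      mul_zero]

/-- if the lines spanned by `L` form a complex projective `t`-design
and `n > 1` is coprime to `2,…,t`, then the `n`-antipodal cover
`X = ⋃_{i<n} ω^i L` is a complex spherical `T`-design for
`T = {(k,l) : k ≤ t, l ≤ t}`. -/
theorem stmt_4 {d n : ℕ} (t : ℕ) (ht : 1 ≤ t) (ω : ℂ) (hω : IsPrimitiveRoot ω n)
    (hn : 1 < n) (hcop : ∀ m : ℕ, 2 ≤ m → m ≤ t → Nat.Coprime n m)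
    (L : Finset (Fin d → ℂ)) (hLsphere : ∀ x ∈ L, cInner x x = 1)
    (hLa : ∀ x ∈ L, ∀ y ∈ L, x ≠ y → ‖cInner x y‖ < 1)
    (hdisj : ∀ i j : ℕ, i < n → j < n → i ≠ j →
      Disjoint (L.image fun x => ω ^ i • x) (L.image fun x => ω ^ j • x))
    (hproj : ∑ x ∈ L, ∑ y ∈ L, ‖cInner x y‖ ^ (2 * t) =
      (L.card : ℝ) ^ 2 / ((d + t - 1).choose t)) :
    IsDesign d ((Finset.range n).biUnion fun i => L.image fun x => ω ^ i • x)
      ((Finset.range (t + 1)) ×ˢ (Finset.range (t + 1))) :=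
  stmt_4_general t ω hω hn hcop L hLsphere hdisj hproj
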